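/- Let r ∈ ℝ and a ∈ S^r_{1,0}(ℝ^{2d}) be such that a − a_r ∈ S^{r−1}_{1,0}(ℝ^{2d}) for some a_r ∈ S^r_{1,0}(ℝ^{2d}) (a principal symbol). Let (x₀,ξ₀) ∈ ℝ^d × (ℝ^d∖{0}) and suppose there exist an open neighbourhood X of x₀, an open cone Γ containing ξ₀, a constant R > 0 and b ∈ S^{−r}_{1,0}(ℝ^{2d}) with a_r(x,ξ)b(x,ξ) = 1 whenever x ∈ X, ξ ∈ Γ and |ξ| > R. Then (x₀,ξ₀) ∉ Char_{(ω₀)}(a), where ω₀(x,ξ) = ⟨ξ⟩^r. -/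

import Mathlib

open MeasureTheory Filter Complex SchwartzMap Real
open scoped RealInnerProductSpace ENNReal NNReal Topology

noncomputable section

attribute [local instance 2000] Classical.propDecidable

/-- `ℝ^d`. -/
abbrev Ed (d : ℕ) : Type := EuclideanSpace ℝ (Fin d)

/-- Schwartz functions on `ℝ^d`. -/
abbrev SchD (d : ℕ) := SchwartzMap (Ed d) ℂ

/-- Tempered distributions on `ℝ^d`. -/
abbrev TDist (d : ℕ) := SchD d →L[ℂ] ℂ

/-- `ℝ^d × ℝ^d`, the phase space, used as the model for `ℝ^{2d}`. -/
abbrev Ed2 (d : ℕ) : Type := Ed d × Ed d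

/-- Schwartz functions on `ℝ^{2d}`. -/
abbrev SchD2 (d : ℕ) := SchwartzMap (Ed2 d) ℂ

/-- Tempered distributions on `ℝ^{2d}`. -/
abbrev TDist2 (d : ℕ) := SchD2 d →L[ℂ] ℂ

/-- The japanese bracket `⟨ξ⟩ = (1 + |ξ|²)^{1/2}`. -/
def jap {d : ℕ} (ξ : Ed d) : ℝ := Real.sqrt (1 + ‖ξ‖ ^ 2)

/-- The japanese bracket on `ℝ^{2d}`. -/
def jap2 {d : ℕ} (Y : Ed2 d) : ℝ := Real.sqrt (1 + ‖Y‖ ^ 2)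

/-- Pair a (distribution-like) functional `u` on Schwartz space with an explicitly given
function `g`, through the (unique) Schwartz representative of `g`, if it exists. -/
def distPairG {V : Type} [NormedAddCommGroup V] [NormedSpace ℝ V]
    (u : SchwartzMap V ℂ → ℂ) (g : V → ℂ) : ℂ :=
  if h : ∃ ψ : SchwartzMap V ℂ, ∀ x, ψ x = g x then u h.choose else 0

/-- The Schwartz representative of an explicitly given function, if it exists. -/
def schwartzOf {V : Type} [NormedAddCommGroup V] [NormedSpace ℝ V]
    (g : V → ℂ) : SchwartzMap V ℂ :=
  if h : ∃ ψ : SchwartzMap V ℂ, ∀ x, ψ x = g x then h.choose else 0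

/-- The constant `(2π)^{-d/2}` of the Fourier transform normalization. -/
def cD (d : ℕ) : ℝ := (2 * Real.pi) ^ (-(d : ℝ) / 2)

/-- Pointwise Fourier transform of the product `φ · u`, where `u` is a distribution-like
functional and `φ` a Schwartz cut-off:  `ℱ(φu)(ξ) = (2π)^{-d/2} u (φ e^{-i⟨·,ξ⟩})`. -/
def ftCut {d : ℕ} (u : SchD d → ℂ) (φ : SchD d) (ξ : Ed d) : ℂ :=
  (cD d : ℂ) * distPairG u fun x => φ x * Complex.exp (-(Complex.I * (⟪x, ξ⟫ : ℂ)))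

/-- Multiplication of a distribution-like functional by a (smooth) function:
`(g·u)(ψ) = u(g ψ)`. -/
def mulDist {V : Type} [NormedAddCommGroup V] [NormedSpace ℝ V]
    (u : SchwartzMap V ℂ → ℂ) (g : V → ℂ) : SchwartzMap V ℂ → ℂ :=
  fun ψ => distPairG u fun x => g x * ψ x

/-- The short-time Fourier transform of `u` with window `φw`:
`V_φ u(x,ξ) = (2π)^{-d/2} u (conj (φw (·-x)) e^{-i⟨·,ξ⟩})`. -/
def stft {d : ℕ} (u : SchD d → ℂ) (φw : SchD d) (x ξ : Ed d) : ℂ :=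
  (cD d : ℂ) * distPairG u fun y =>
    (starRingEnd ℂ) (φw (y - x)) * Complex.exp (-(Complex.I * (⟪y, ξ⟫ : ℂ)))

/-- The inner product on `ℝ^{2d} = ℝ^d × ℝ^d`. -/
def inner2 {d : ℕ} (X Y : Ed2 d) : ℝ := ⟪X.1, Y.1⟫ + ⟪X.2, Y.2⟫

/-- The short-time Fourier transform on `ℝ^{2d}`. -/
def stft2 {d : ℕ} (u : SchD2 d → ℂ) (φw : SchD2 d) (X Y : Ed2 d) : ℂ :=
  (cD (2 * d) : ℂ) * distPairG u fun Z =>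
    (starRingEnd ℂ) (φw (Z - X)) * Complex.exp (-(Complex.I * ((inner2 Z Y : ℝ) : ℂ)))

/-- Open cone in `ℝ^d ∖ {0}` with vertex at the origin. -/
def IsOpenConeNZ {d : ℕ} (Γ : Set (Ed d)) : Prop :=
  IsOpen Γ ∧ (0 : Ed d) ∉ Γ ∧ ∀ ξ ∈ Γ, ∀ t : ℝ, 0 < t → t • ξ ∈ Γ

/-- The class `𝒫(ℝ^n)` of polynomially moderated positive measurable weights. -/
def moderate1 {V : Type} [NormedAddCommGroup V] [MeasurableSpace V] (ω : V → ℝ) : Prop :=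
  (∀ x, 0 < ω x) ∧ Measurable ω ∧
    ∃ C : ℝ, 0 < C ∧ ∃ N : ℕ, ∀ x y, ω (x + y) ≤ C * ω x * (1 + ‖y‖) ^ N

/-- The class `𝒫` for weights written as functions of two (blocks of) variables. -/
def moderate2 {V W : Type} [NormedAddCommGroup V] [NormedAddCommGroup W]
    [MeasurableSpace V] [MeasurableSpace W] (ω : V → W → ℝ) : Prop :=
  (∀ x ξ, 0 < ω x ξ) ∧ Measurable (Function.uncurry ω) ∧
    ∃ C : ℝ, 0 < C ∧ ∃ N : ℕ, ∀ x ξ y η,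
      ω (x + y) (ξ + η) ≤ C * ω x ξ * (1 + ‖y‖ + ‖η‖) ^ N

/-- The class `𝒫(ℝ^{4d})` for weights written as functions of four blocks of variables. -/
def moderate4 {d : ℕ} (ω : Ed d → Ed d → Ed d → Ed d → ℝ) : Prop :=
  (∀ x ξ ζ z, 0 < ω x ξ ζ z) ∧
    Measurable (fun p : Ed d × Ed d × Ed d × Ed d => ω p.1 p.2.1 p.2.2.1 p.2.2.2) ∧
    ∃ C : ℝ, 0 < C ∧ ∃ N : ℕ, ∀ x ξ ζ z x' ξ' ζ' z',
      ω (x + x') (ξ + ξ') (ζ + ζ') (z + z') ≤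
        C * ω x ξ ζ z * (1 + ‖x'‖ + ‖ξ'‖ + ‖ζ'‖ + ‖z'‖) ^ N

/-- Iterated directional (partial) derivative along a list of directions. -/
def pditer {V F : Type} [NormedAddCommGroup V] [NormedSpace ℝ V]
    [NormedAddCommGroup F] [NormedSpace ℝ F] :
    List V → (V → F) → V → F
  | [], f => f
  | v :: l, f => pditer l fun x => fderiv ℝ f x v

/-- The list of coordinate directions determined by a multi-index `α`. -/
def dirList {d : ℕ} (α : Fin d → ℕ) : List (Ed d) :=
  (List.finRange d).foldr
    (fun i acc => List.replicate (α i) (EuclideanSpace.single i (1 : ℝ)) ++ acc) []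

/-- The length `|α|` of a multi-index. -/
def mOrder {d : ℕ} (α : Fin d → ℕ) : ℕ := ∑ i, α i

/-- Directions on `ℝ^d × ℝ^d` corresponding to the mixed derivative `∂_x^α ∂_ξ^β`. -/
def dirListP {d : ℕ} (α β : Fin d → ℕ) : List (Ed2 d) :=
  (dirList α).map (fun v => (v, (0 : Ed d))) ++ (dirList β).map (fun v => ((0 : Ed d), v))

/-- Directions on `ℝ^{2d} × ℝ^{2d}` corresponding to `∂_x^{α₁} ∂_ξ^{α₂} ∂_ζ^{β₁} ∂_z^{β₂}`. -/
def dirListP2 {d : ℕ} (α₁ α₂ β₁ β₂ : Fin d → ℕ) : List (Ed2 d × Ed2 d) :=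
  (dirList α₁).map (fun v => ((v, (0 : Ed d)), ((0 : Ed d), (0 : Ed d)))) ++
  (dirList α₂).map (fun v => (((0 : Ed d), v), ((0 : Ed d), (0 : Ed d)))) ++
  (dirList β₁).map (fun v => (((0 : Ed d), (0 : Ed d)), (v, (0 : Ed d)))) ++
  (dirList β₂).map (fun v => (((0 : Ed d), (0 : Ed d)), ((0 : Ed d), v)))

/-- The symbol class `S^{(ω₀)}_{ρ,δ}(ℝ^{2d})`:  smooth functions `a` with
`|∂_x^α ∂_ξ^β a(x,ξ)| ≤ C_{αβ} ω₀(x,ξ) ⟨ξ⟩^{-ρ|β| + δ|α|}`. -/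
def SymbC {d : ℕ} {F : Type} [NormedAddCommGroup F] [NormedSpace ℝ F]
    (ρ δ : ℝ) (ω₀ : Ed d → Ed d → ℝ) (a : Ed d → Ed d → F) : Prop :=
  ContDiff ℝ ((⊤ : ℕ∞) : WithTop ℕ∞) (Function.uncurry a) ∧
    ∀ α β : Fin d → ℕ, ∃ C : ℝ, 0 < C ∧ ∀ x ξ : Ed d,
      ‖pditer (dirListP α β) (Function.uncurry a) (x, ξ)‖ ≤
        C * ω₀ x ξ * jap ξ ^ (δ * (mOrder α : ℝ) - ρ * (mOrder β : ℝ))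

/-- The symbol-type class on `ℝ^{2d} ⊕ ℝ^{2d}`, the second block of variables playing the
role of the frequency variable. -/
def SymbC2 {d : ℕ} {F : Type} [NormedAddCommGroup F] [NormedSpace ℝ F]
    (ρ δ : ℝ) (ω₀ : Ed2 d → Ed2 d → ℝ) (a : Ed2 d → Ed2 d → F) : Prop :=
  ContDiff ℝ ((⊤ : ℕ∞) : WithTop ℕ∞) (Function.uncurry a) ∧
    ∀ α₁ α₂ β₁ β₂ : Fin d → ℕ, ∃ C : ℝ, 0 < C ∧ ∀ X Y : Ed2 d,
      ‖pditer (dirListP2 α₁ α₂ β₁ β₂) (Function.uncurry a) (X, Y)‖ ≤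
        C * ω₀ X Y *
          jap2 Y ^ (δ * ((mOrder α₁ + mOrder α₂ : ℕ) : ℝ) -
            ρ * ((mOrder β₁ + mOrder β₂ : ℕ) : ℝ))

/-- The weight class `𝒫_{ρ,δ}(ℝ^{2d})`. -/
def PweightRD {d : ℕ} (ρ δ : ℝ) (ω : Ed d → Ed d → ℝ) : Prop :=
  moderate2 ω ∧ SymbC ρ δ ω ω

/-- The weight class `𝒫_{ρ,δ}(ℝ^{2d} ⊕ ℝ^{2d})`;  with `ρ = δ = 0` this is `𝒫₀(ℝ^{4d})`. -/
def PweightRD2 {d : ℕ} (ρ δ : ℝ) (ω : Ed2 d → Ed2 d → ℝ) : Prop :=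
  moderate2 ω ∧ SymbC2 ρ δ ω ω

/-- `c` is `(X,Γ,R)`-unitary:  `c = 1` on `X × (Γ ∩ {|ξ| ≥ R})`. -/
def IsUnitaryOn {d : ℕ} (c : Ed d → Ed d → ℂ) (X Γ : Set (Ed d)) (R : ℝ) : Prop :=
  ∀ x ∈ X, ∀ ξ ∈ Γ, R ≤ ‖ξ‖ → c x ξ = 1

/-- `(x₀,ξ₀)` is non-characteristic for `a` with respect to `ω₀`. -/
def NonChar {d : ℕ} (ρ δ : ℝ) (ω₀ : Ed d → Ed d → ℝ) (a : Ed d → Ed d → ℂ)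
    (p : Ed d × Ed d) : Prop :=
  ∃ (b c h : Ed d → Ed d → ℂ) (X Γ : Set (Ed d)) (R : ℝ),
    SymbC ρ δ (fun x ξ => (ω₀ x ξ)⁻¹) b ∧
    SymbC ρ δ (fun _ _ => (1 : ℝ)) c ∧
    SymbC ρ δ (fun _ ξ => jap ξ ^ (-(ρ - δ))) h ∧
    IsOpen X ∧ p.1 ∈ X ∧ IsOpenConeNZ Γ ∧ p.2 ∈ Γ ∧ 0 < R ∧
    IsUnitaryOn c X Γ R ∧
    ∀ x ξ, b x ξ * a x ξ = c x ξ + h x ξ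

/-- The set of characteristic points `Char_{(ω₀)}(a) ⊆ ℝ^d × (ℝ^d ∖ 0)`. -/
def CharSet {d : ℕ} (ρ δ : ℝ) (ω₀ : Ed d → Ed d → ℝ) (a : Ed d → Ed d → ℂ) :
    Set (Ed d × Ed d) :=
  {p | p.2 ≠ 0 ∧ ¬ NonChar ρ δ ω₀ a p}

/-- Local ellipticity of the symbol `a` with respect to `ω₀`. -/
def IsElliptic {d : ℕ} (ω₀ : Ed d → Ed d → ℝ) (a : Ed d → Ed d → ℂ) : Prop :=
  ∀ K : Set (Ed d), IsCompact K →
    ∃ c R : ℝ, 0 < c ∧ 0 < R ∧ ∀ x ∈ K, ∀ ξ : Ed d, R ≤ ‖ξ‖ → c * ω₀ x ξ ≤ ‖a x ξ‖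

/-- The oscillatory kernel `e^{i⟨x,ξ⟩}`. -/
def fourierKer {d : ℕ} (x ξ : Ed d) : ℂ := Complex.exp (Complex.I * (⟪x, ξ⟫ : ℂ))

/-- `F = Op(a) f` in the Kohn-Nirenberg quantization, characterized by duality:
`⟨Op(a)f, g⟩ = ⟨f, θ_g⟩` where `θ_g(y) = (2π)^{-d} ∫∫ a(x,ξ) g(x) e^{i⟨x-y,ξ⟩} dx dξ`. -/
def IsOpKN {d : ℕ} (a : Ed d → Ed d → ℂ) (f F : SchD d → ℂ) : Prop :=
  ∀ g θ : SchD d,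
    (∀ y : Ed d, θ y = (((2 * Real.pi) ^ (-(d : ℝ)) : ℝ) : ℂ) *
        ∫ ξ : Ed d, ∫ x : Ed d, a x ξ * g x * fourierKer (x - y) ξ) →
    F g = f θ

/-- `Op(a) f (x)` for Schwartz `f`, as an iterated oscillatory integral. -/
def opFun {d : ℕ} (a : Ed d → Ed d → ℂ) (f : SchD d) (x : Ed d) : ℂ :=
  (((2 * Real.pi) ^ (-(d : ℝ)) : ℝ) : ℂ) *
    ∫ ξ : Ed d, ∫ y : Ed d, a x ξ * f y * fourierKer (x - y) ξ

/-- `Op_t(a) f (x)` for Schwartz `f`. -/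
def opFunT {d : ℕ} (a : Ed d → Ed d → ℂ) (t : ℝ) (f : SchD d) (x : Ed d) : ℂ :=
  (((2 * Real.pi) ^ (-(d : ℝ)) : ℝ) : ℂ) *
    ∫ ξ : Ed d, ∫ y : Ed d, a ((1 - t) • x + t • y) ξ * f y * fourierKer (x - y) ξ

/-- A Schwartz function has temperate growth. -/
theorem SchwartzMap.hasTemperateGrowth' {V : Type} [NormedAddCommGroup V] [NormedSpace ℝ V]
    (f : SchwartzMap V ℂ) : Function.HasTemperateGrowth (⇑f) := by
  refine ⟨f.smooth', fun n => ⟨0, SchwartzMap.seminorm ℝ 0 n f, fun x => ?_⟩⟩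
  simpa using norm_iteratedFDeriv_le_seminorm ℝ f n x

/-- The canonical embedding of Schwartz functions into tempered distributions. -/
def iota {d : ℕ} (f : SchD d) : TDist d :=
  letI B : SchD d →L[ℝ] SchD d :=
    SchwartzMap.bilinLeftCLM (ContinuousLinearMap.mul ℝ ℂ) f.hasTemperateGrowth'
  letI I : SchD d →L[ℂ] ℂ := SchwartzMap.integralCLM ℂ (volume : Measure (Ed d))
  { toFun := fun g => I (B g)
    map_add' := fun g₁ g₂ => by show I (B (g₁ + g₂)) = I (B g₁) + I (B g₂); rw [map_add, map_add]
    map_smul' := fun c g => by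
      show I (B (c • g)) = c * I (B g)
      have h : B (c • g) = c • B g := by
        ext x
        show (c • g) x * f x = (c • B g) x
        rw [smul_apply, smul_apply]
        show c • g x * f x = c • (g x * f x)
        simp only [smul_eq_mul]; ring
      rw [h, _root_.map_smul, smul_eq_mul]
    cont := by
      exact (SchwartzMap.integralCLM ℂ (volume : Measure (Ed d))).continuous.comp
        (SchwartzMap.bilinLeftCLM (ContinuousLinearMap.mul ℝ ℂ)
          f.hasTemperateGrowth').continuous }

/-- `L^q`-type quantity for `ℝ≥0∞`-valued functions, used for mixed norms. -/
def eLpNormENN {α : Type} [MeasurableSpace α] (f : α → ℝ≥0∞) (q : ℝ≥0∞) (μ : Measure α) :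
    ℝ≥0∞ :=
  if q = ∞ then essSup f μ else (∫⁻ a, f a ^ q.toReal ∂μ) ^ (1 / q.toReal)

/-- Finiteness of the Fourier Lebesgue seminorm `|φu|_{ℱL^q_{(ω)}(Γ)}`. -/
def FLGammaFin {d : ℕ} (q : ℝ≥0∞) (ω : Ed d → Ed d → ℝ) (u : SchD d → ℂ) (φ : SchD d)
    (Γ : Set (Ed d)) : Prop :=
  eLpNorm (fun ξ => ‖ftCut u φ ξ‖ * ω 0 ξ) q (volume.restrict Γ) < ⊤

/-- `φ` is an admissible cut-off function at `x₀` inside `X`. -/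
def CutoffAt {d : ℕ} (φ : SchD d) (X : Set (Ed d)) (x₀ : Ed d) : Prop :=
  HasCompactSupport (⇑φ) ∧ tsupport (⇑φ) ⊆ X ∧ φ x₀ ≠ 0

/-- The wave-front set of `u` with respect to `ℱL^q_{(ω)}`, relative to the open set `X`. -/
def WF_FL {d : ℕ} (q : ℝ≥0∞) (ω : Ed d → Ed d → ℝ) (X : Set (Ed d)) (u : SchD d → ℂ) :
    Set (Ed d × Ed d) :=
  {p | p.1 ∈ X ∧ p.2 ≠ 0 ∧ ∀ φ : SchD d, CutoffAt φ X p.1 →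
    ∀ Γ : Set (Ed d), IsOpenConeNZ Γ → p.2 ∈ Γ → ¬ FLGammaFin q ω u φ Γ}

/-- The sup-type wave-front set with respect to an array of Fourier Lebesgue spaces. -/
def WF_FLsup {d : ℕ} {J : Type} (q : J → ℝ≥0∞) (ω : J → Ed d → Ed d → ℝ)
    (u : SchD d → ℂ) : Set (Ed d × Ed d) :=
  {p | p.2 ≠ 0 ∧ ∀ φ : SchD d, CutoffAt φ Set.univ p.1 →
    ∀ Γ : Set (Ed d), IsOpenConeNZ Γ → p.2 ∈ Γ → ¬ ∀ j : J, FLGammaFin (q j) (ω j) u φ Γ}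

/-- The inf-type wave-front set with respect to an array of Fourier Lebesgue spaces. -/
def WF_FLinf {d : ℕ} {J : Type} (q : J → ℝ≥0∞) (ω : J → Ed d → Ed d → ℝ)
    (u : SchD d → ℂ) : Set (Ed d × Ed d) :=
  {p | p.2 ≠ 0 ∧ ∀ φ : SchD d, CutoffAt φ Set.univ p.1 →
    ∀ Γ : Set (Ed d), IsOpenConeNZ Γ → p.2 ∈ Γ → ¬ ∃ j : J, FLGammaFin (q j) (ω j) u φ Γ}

/-- The classical Hörmander wave-front set. -/
def WFclassical {d : ℕ} (u : SchD d → ℂ) : Set (Ed d × Ed d) :=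
  {p | p.2 ≠ 0 ∧ ∀ φ : SchD d, CutoffAt φ Set.univ p.1 →
    ∀ Γ : Set (Ed d), IsOpenConeNZ Γ → p.2 ∈ Γ →
      ∃ N : ℕ, ¬ ∃ C : ℝ, ∀ ξ ∈ Γ, jap ξ ^ (N : ℝ) * ‖ftCut u φ ξ‖ ≤ C}

/-- `g` is a (continuous-type) representative on the cone `Γ` of the Fourier transform of the
distribution `F`. -/
def IsFTrepOn {d : ℕ} (F : SchD d → ℂ) (Γ : Set (Ed d)) (g : Ed d → ℂ) : Prop :=
  ∀ ψ ψ' : SchD d, tsupport (⇑ψ) ⊆ Γ →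
    (∀ ξ : Ed d, ψ' ξ = (cD d : ℂ) *
        ∫ x : Ed d, ψ x * Complex.exp (-(Complex.I * (⟪x, ξ⟫ : ℂ)))) →
    F ψ' = ∫ ξ : Ed d, g ξ * ψ ξ

/-- Finiteness of the Fourier Lebesgue seminorm `|F|_{ℱL^q_{(ω)}(Γ)}` of a tempered
distribution `F` (no cut-off), via representatives of `ℱF` on `Γ`. -/
def FLGammaFinD {d : ℕ} (q : ℝ≥0∞) (ω : Ed d → Ed d → ℝ) (F : SchD d → ℂ)
    (Γ : Set (Ed d)) : Prop :=
  ∃ g : Ed d → ℂ, IsFTrepOn F Γ g ∧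
    eLpNorm (fun ξ => ‖g ξ‖ * ω 0 ξ) q (volume.restrict Γ) < ⊤

/-- The distribution `f` is supported in `K`. -/
def SuppIn {d : ℕ} (f : SchD d → ℂ) (K : Set (Ed d)) : Prop :=
  ∀ ψ : SchD d, Disjoint (tsupport (⇑ψ)) K → f ψ = 0

/-- `f` defines a distribution on the open set `X`:  a Schwartz-seminorm bound holds for test
functions supported in any fixed compact subset of `X`. -/
def IsDistOn {d : ℕ} (f : SchD d → ℂ) (X : Set (Ed d)) : Prop :=
  ∀ K : Set (Ed d), IsCompact K → K ⊆ X →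
    ∃ C : ℝ, 0 < C ∧ ∃ N : ℕ, ∀ ψ : SchD d, tsupport (⇑ψ) ⊆ K →
      ‖f ψ‖ ≤ C * ∑ k ∈ Finset.range (N + 1), ∑ n ∈ Finset.range (N + 1),
        SchwartzMap.seminorm ℝ k n ψ

/-- `f` is a tempered distribution of order at most `N`. -/
def HasOrderLE {d : ℕ} (f : SchD d → ℂ) (N : ℕ) : Prop :=
  ∃ C : ℝ, 0 < C ∧ ∀ ψ : SchD d,
    ‖f ψ‖ ≤ C * ∑ k ∈ Finset.range (N + 1), ∑ n ∈ Finset.range (N + 1),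
      SchwartzMap.seminorm ℝ k n ψ

/-- The mixed-norm quantity `(∫_Γ (∫ |V_φ u(x,ξ) ω(x,ξ)|^p dx)^{q/p} dξ)^{1/q}` defining the
modulation space seminorm over a cone `Γ`. -/
def MGammaNorm {d : ℕ} (p q : ℝ≥0∞) (ω : Ed d → Ed d → ℝ) (u : SchD d → ℂ) (φw : SchD d)
    (Γ : Set (Ed d)) : ℝ≥0∞ :=
  eLpNormENN (fun ξ => eLpNorm (fun x => ‖stft u φw x ξ‖ * ω x ξ) p volume) q
    (volume.restrict Γ)

/-- The mixed-norm quantity defining the `W^{p,q}` (Wiener amalgam type) seminorm over a cone. -/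
def WGammaNorm {d : ℕ} (p q : ℝ≥0∞) (ω : Ed d → Ed d → ℝ) (u : SchD d → ℂ) (φw : SchD d)
    (Γ : Set (Ed d)) : ℝ≥0∞ :=
  eLpNormENN (fun x => eLpNorm (fun ξ => ‖stft u φw x ξ‖ * ω x ξ) q (volume.restrict Γ))
    p volume

/-- The wave-front set of `u` with respect to `M^{p,q}_{(ω)}` (window `φw`). -/
def WF_M {d : ℕ} (p q : ℝ≥0∞) (ω : Ed d → Ed d → ℝ) (X : Set (Ed d)) (u : SchD d → ℂ)
    (φw : SchD d) : Set (Ed d × Ed d) :=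
  {pt | pt.1 ∈ X ∧ pt.2 ≠ 0 ∧ ∀ φ : SchD d, CutoffAt φ X pt.1 →
    ∀ Γ : Set (Ed d), IsOpenConeNZ Γ → pt.2 ∈ Γ →
      ¬ MGammaNorm p q ω (mulDist u (⇑φ)) φw Γ < ⊤}

/-- The wave-front set of `u` with respect to `W^{p,q}_{(ω)}` (window `φw`). -/
def WF_W {d : ℕ} (p q : ℝ≥0∞) (ω : Ed d → Ed d → ℝ) (X : Set (Ed d)) (u : SchD d → ℂ)
    (φw : SchD d) : Set (Ed d × Ed d) :=
  {pt | pt.1 ∈ X ∧ pt.2 ≠ 0 ∧ ∀ φ : SchD d, CutoffAt φ X pt.1 →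
    ∀ Γ : Set (Ed d), IsOpenConeNZ Γ → pt.2 ∈ Γ →
      ¬ WGammaNorm p q ω (mulDist u (⇑φ)) φw Γ < ⊤}

/-- Distributional directional derivative: `(∂_v u)(ψ) = -u(∂_v ψ)`. -/
def distDeriv {V : Type} [NormedAddCommGroup V] [NormedSpace ℝ V]
    (v : V) (u : SchwartzMap V ℂ → ℂ) : SchwartzMap V ℂ → ℂ :=
  fun ψ => -(u (LineDeriv.lineDerivOpCLM ℝ (SchwartzMap V ℂ) v ψ))

/-- Iterated distributional derivative along a list of directions. -/
def distDerivList {V : Type} [NormedAddCommGroup V] [NormedSpace ℝ V] :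
    List V → (SchwartzMap V ℂ → ℂ) → SchwartzMap V ℂ → ℂ
  | [], u => u
  | v :: l, u => distDerivList l (distDeriv v u)

/-- The distributional derivative `∂_ξ^α u` of a distribution on `ℝ^{2d}`, in the second
(frequency) block of variables. -/
def distDerivXi {d : ℕ} (α : Fin d → ℕ) (u : SchD2 d → ℂ) : SchD2 d → ℂ :=
  distDerivList ((dirList α).map fun v => (((0 : Ed d), v) : Ed2 d)) u

/-- Membership `u ∈ M^{∞,1}_{(ν)}(ℝ^{2d})` (with respect to some nonzero Schwartz window). -/
def MemM1inf {d : ℕ} (u : SchD2 d → ℂ) (ν : Ed2 d → Ed2 d → ℝ) : Prop :=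
  ∃ φw : SchD2 d, φw ≠ 0 ∧
    (∫⁻ Y : Ed2 d, ⨆ X : Ed2 d, ENNReal.ofReal (‖stft2 u φw X Y‖ * ν X Y)) < ⊤

/-- The weight `ω_{s,ρ}(x,ξ,ζ,z) = ω(x,ξ,ζ,z)⟨x⟩^{-s₄}⟨ζ⟩^{-s₃}⟨ξ⟩^{-ρs₂}⟨z⟩^{-s₁}`,
where `X = (x,ξ)` and `Y = (ζ,z)`. -/
def omegaS {d : ℕ} (ω : Ed2 d → Ed2 d → ℝ) (s₁ s₂ s₃ s₄ ρ : ℝ) : Ed2 d → Ed2 d → ℝ :=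
  fun X Y =>
    ω X Y * jap X.1 ^ (-s₄) * jap Y.1 ^ (-s₃) * jap X.2 ^ (-(ρ * s₂)) * jap Y.2 ^ (-s₁)

/-- The symbol class `℧^{s,ρ}_{(ω)}(ℝ^{2d})`:  `∂_ξ^α a ∈ M^{∞,1}_{(1/ω_{s(α),ρ})}` for all
`|α| ≤ 2 s₂`, where `s(α) = (s₁,|α|,s₃,s₄)`. -/
def MhoMem {d : ℕ} (ω : Ed2 d → Ed2 d → ℝ) (s₁ s₂ s₃ s₄ ρ : ℝ) (a : SchD2 d → ℂ) : Prop :=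
  ∀ α : Fin d → ℕ, (mOrder α : ℝ) ≤ 2 * s₂ →
    MemM1inf (distDerivXi α a) fun X Y => (omegaS ω s₁ (mOrder α : ℝ) s₃ s₄ ρ X Y)⁻¹

/-- The modulation space norm-type quantity for `M^{p,q}_{(ω)}(ℝ^d)` with window `φw`. -/
def Mnorm {d : ℕ} (p q : ℝ≥0∞) (ω : Ed d → Ed d → ℝ) (φw : SchD d) (u : SchD d → ℂ) :
    ℝ≥0∞ :=
  eLpNormENN (fun ξ => eLpNorm (fun x => ‖stft u φw x ξ‖ * ω x ξ) p volume) q volume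

/-- The `M^∞_{(ϑ)}(ℝ^d)` norm-type quantity with window `φw`. -/
def MnormInf {d : ℕ} (ϑ : Ed d → Ed d → ℝ) (φw : SchD d) (u : SchD d → ℂ) : ℝ≥0∞ :=
  ⨆ x : Ed d, ⨆ ξ : Ed d, ENNReal.ofReal (‖stft u φw x ξ‖ * ϑ x ξ)

/-- The (paper-normalized) Fourier transform of a Schwartz function, pointwise. -/
def ftS {d : ℕ} (f : SchD d) (ξ : Ed d) : ℂ :=
  (cD d : ℂ) * ∫ x : Ed d, f x * Complex.exp (-(Complex.I * (⟪x, ξ⟫ : ℂ)))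

/-- The pairing `⟨Op(a) f, g⟩ = ⟨a, (x,ξ) ↦ (2π)^{-d/2} g(x) ℱf(ξ) e^{i⟨x,ξ⟩}⟩` defining a
pseudo-differential operator with distributional symbol `a` on Schwartz functions `f`, `g`. -/
def opDPair {d : ℕ} (a : SchD2 d → ℂ) (f g : SchD d) : ℂ :=
  distPairG a fun X => (cD d : ℂ) * g X.1 * ftS f X.2 * fourierKer X.1 X.2

/-- Multiplication of a Schwartz function by a function, through a Schwartz representative. -/
def mulSchwartzFn {V : Type} [NormedAddCommGroup V] [NormedSpace ℝ V]
    (g : V → ℂ) (f : SchwartzMap V ℂ) : SchwartzMap V ℂ :=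
  schwartzOf fun x => g x * f x

/-- `F = Op(a) f`, where `Op(a)` is extended from Schwartz functions by continuity along
norm-bounded weak-* convergent sequences in `M^∞_{(ϑ)}`. -/
def IsOpModExt {d : ℕ} (a : SchD2 d → ℂ) (ϑ : Ed d → Ed d → ℝ) (φw : SchD d)
    (f F : SchD d → ℂ) : Prop :=
  ∀ (fs : ℕ → SchD d) (Bd : ℝ≥0∞), Bd ≠ ⊤ →
    (∀ n, MnormInf ϑ φw (⇑(iota (fs n))) ≤ Bd) →
    (∀ ψ : SchD d, Tendsto (fun n => iota (fs n) ψ) atTop (𝓝 (f ψ))) →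
    ∀ g : SchD d, Tendsto (fun n => opDPair a (fs n) g) atTop (𝓝 (F g))

/-!
Take `b` itself as the parametrix: `b · a = b · a_r + b · (a - a_r)`. By the Leibniz rule for
the anisotropic derivatives `∂_x^α ∂_ξ^β`, symbol classes multiply,
`S^{(ω₁)}_{ρ,δ} · S^{(ω₂)}_{ρ,δ} ⊆ S^{(ω₁ω₂)}_{ρ,δ}`; hence `c = b · a_r ∈ S^0_{1,0}`, which equals
`1` on `X × (Γ ∩ {|ξ| ≥ R + 1})`, and `h = b · (a - a_r) ∈ S^{-1}_{1,0}`.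
-/

open scoped ContDiff

section Leibniz

variable {V : Type} [NormedAddCommGroup V] [NormedSpace ℝ V]

/-- The `2 ^ l.length` ways of distributing the entries of `l` between two lists, each keeping
the order of `l`: the index set of the Leibniz rule for `pditer l`. -/
def leibnizSplits {W : Type} : List W → List (List W × List W)
  | [] => [([], [])]
  | v :: l =>
    ((leibnizSplits l).map fun p => (v :: p.1, p.2)) ++
      ((leibnizSplits l).map fun p => (p.1, v :: p.2))

lemma contDiff_fderiv_apply {F : Type} [NormedAddCommGroup F] [NormedSpace ℝ F] {f : V → F}
    (hf : ContDiff ℝ ∞ f) (v : V) : ContDiff ℝ ∞ fun x => fderiv ℝ f x v :=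
  (hf.fderiv_right le_rfl).clm_apply contDiff_const

lemma pditer_add {F : Type} [NormedAddCommGroup F] [NormedSpace ℝ F] (l : List V) :
    ∀ {f g : V → F}, ContDiff ℝ ∞ f → ContDiff ℝ ∞ g →
      pditer l (fun x => f x + g x) = fun z => pditer l f z + pditer l g z := by
  induction l with
  | nil => intro f g _ _; rfl
  | cons v l ih =>
    intro f g hf hg
    have hderiv : (fun x => fderiv ℝ (fun y => f y + g y) x v)
        = fun x => fderiv ℝ f x v + fderiv ℝ g x v := by
      funext x
      rw [fderiv_fun_add (hf.differentiable (by simp)).differentiableAt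
        (hg.differentiable (by simp)).differentiableAt]
      rfl
    simp only [pditer, hderiv]
    exact ih (contDiff_fderiv_apply hf v) (contDiff_fderiv_apply hg v)

lemma pditer_mul {𝔸 : Type} [NormedCommRing 𝔸] [NormedAlgebra ℝ 𝔸] (l : List V) :
    ∀ {f g : V → 𝔸}, ContDiff ℝ ∞ f → ContDiff ℝ ∞ g →
      pditer l (fun x => f x * g x) =
        fun z => ((leibnizSplits l).map fun p => pditer p.1 f z * pditer p.2 g z).sum := by
  induction l with
  | nil => intro f g _ _; simp [leibnizSplits, pditer]
  | cons v l ih =>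
    intro f g hf hg
    have hf' := contDiff_fderiv_apply hf v
    have hg' := contDiff_fderiv_apply hg v
    have hderiv : (fun x => fderiv ℝ (fun y => f y * g y) x v)
        = fun x => fderiv ℝ f x v * g x + f x * fderiv ℝ g x v := by
      funext x
      rw [fderiv_fun_mul (hf.differentiable (by simp)).differentiableAt
        (hg.differentiable (by simp)).differentiableAt]
      simp only [add_apply, smul_apply, smul_eq_mul]
      ring
    funext z
    simp only [pditer, hderiv, pditer_add l (hf'.mul hg) (hf.mul hg'), ih hf' hg, ih hf hg',
      leibnizSplits, List.map_append, List.sum_append, List.map_map]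
    rfl

end Leibniz

section Splits

variable {W : Type}

lemma mem_leibnizSplits_cons {v : W} {l : List W} {p : List W × List W}
    (hp : p ∈ leibnizSplits (v :: l)) :
    (∃ q ∈ leibnizSplits l, p = (v :: q.1, q.2)) ∨
      ∃ q ∈ leibnizSplits l, p = (q.1, v :: q.2) := by
  simp only [leibnizSplits, List.mem_append, List.mem_map] at hp
  rcases hp with ⟨q, hq, rfl⟩ | ⟨q, hq, rfl⟩
  exacts [Or.inl ⟨q, hq, rfl⟩, Or.inr ⟨q, hq, rfl⟩]

lemma mem_leibnizSplits_append (l₁ l₂ : List W) {p : List W × List W}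
    (hp : p ∈ leibnizSplits (l₁ ++ l₂)) :
    ∃ p₁ ∈ leibnizSplits l₁, ∃ p₂ ∈ leibnizSplits l₂, p = (p₁.1 ++ p₂.1, p₁.2 ++ p₂.2) := by
  induction l₁ generalizing p with
  | nil => exact ⟨([], []), by simp [leibnizSplits], p, hp, rfl⟩
  | cons v l ih =>
    rcases mem_leibnizSplits_cons hp with ⟨q, hq, rfl⟩ | ⟨q, hq, rfl⟩
    · obtain ⟨p₁, h₁, p₂, h₂, rfl⟩ := ih hq
      exact ⟨(v :: p₁.1, p₁.2), by simp [leibnizSplits, h₁], p₂, h₂, rfl⟩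
    · obtain ⟨p₁, h₁, p₂, h₂, rfl⟩ := ih hq
      exact ⟨(p₁.1, v :: p₁.2), by simp [leibnizSplits, h₁], p₂, h₂, rfl⟩

lemma mem_leibnizSplits_map {W' : Type} (f : W → W') (l : List W) {p : List W' × List W'}
    (hp : p ∈ leibnizSplits (l.map f)) :
    ∃ q ∈ leibnizSplits l, p = (q.1.map f, q.2.map f) := by
  induction l generalizing p with
  | nil => exact ⟨([], []), by simp [leibnizSplits], by simpa [leibnizSplits] using hp⟩
  | cons v l ih =>
    rcases mem_leibnizSplits_cons hp with ⟨q, hq, rfl⟩ | ⟨q, hq, rfl⟩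
    · obtain ⟨q', hq', rfl⟩ := ih hq
      exact ⟨(v :: q'.1, q'.2), by simp [leibnizSplits, hq'], rfl⟩
    · obtain ⟨q', hq', rfl⟩ := ih hq
      exact ⟨(q'.1, v :: q'.2), by simp [leibnizSplits, hq'], rfl⟩

lemma mem_leibnizSplits_replicate (v : W) (n : ℕ) {p : List W × List W}
    (hp : p ∈ leibnizSplits (List.replicate n v)) :
    ∃ k ≤ n, p = (List.replicate k v, List.replicate (n - k) v) := by
  induction n generalizing p with
  | zero => exact ⟨0, le_rfl, by simpa [leibnizSplits] using hp⟩
  | succ n ih =>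
    rw [List.replicate_succ] at hp
    rcases mem_leibnizSplits_cons hp with ⟨q, hq, rfl⟩ | ⟨q, hq, rfl⟩
    · obtain ⟨k, hk, rfl⟩ := ih hq
      exact ⟨k + 1, Nat.succ_le_succ hk, by rw [Nat.succ_sub_succ, List.replicate_succ]⟩
    · obtain ⟨k, hk, rfl⟩ := ih hq
      exact ⟨k, Nat.le_succ_of_le hk, by rw [Nat.sub_add_comm hk, List.replicate_succ]⟩

lemma mem_leibnizSplits_flatMap_replicate {ι : Type} [DecidableEq ι] (e : ι → W) {L : List ι}
    (hL : L.Nodup) (α : ι → ℕ) {p : List W × List W}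
    (hp : p ∈ leibnizSplits (L.flatMap fun i => List.replicate (α i) (e i))) :
    ∃ α₁ α₂ : ι → ℕ, (∀ i ∈ L, α₁ i + α₂ i = α i) ∧
      p = (L.flatMap fun i => List.replicate (α₁ i) (e i),
        L.flatMap fun i => List.replicate (α₂ i) (e i)) := by
  induction L generalizing p with
  | nil => exact ⟨0, 0, by simp, by simpa [leibnizSplits] using hp⟩
  | cons i L ih =>
    obtain ⟨hiL, hL⟩ := List.nodup_cons.mp hL
    rw [List.flatMap_cons] at hp
    obtain ⟨p₁, h₁, p₂, h₂, rfl⟩ := mem_leibnizSplits_append _ _ hp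
    obtain ⟨k, hk, rfl⟩ := mem_leibnizSplits_replicate (e i) (α i) h₁
    obtain ⟨α₁, α₂, hsum, rfl⟩ := ih hL h₂
    have hupdate (β : ι → ℕ) (m : ℕ) :
        (L.flatMap fun j => List.replicate (Function.update β i m j) (e j)) =
          L.flatMap fun j => List.replicate (β j) (e j) :=
      List.flatMap_congr fun j hj => by
        rw [Function.update_of_ne (by rintro rfl; exact hiL hj)]
    refine ⟨Function.update α₁ i k, Function.update α₂ i (α i - k), ?_, ?_⟩
    · intro j hj
      by_cases hji : j = i
      · subst hji
        simp only [Function.update_self]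
        exact Nat.add_sub_cancel' hk
      · simp only [Function.update_of_ne hji]
        exact hsum j ((List.mem_cons.mp hj).resolve_left hji)
    · simp only [List.flatMap_cons, Function.update_self, hupdate]

end Splits

lemma dirList_eq_flatMap {d : ℕ} (α : Fin d → ℕ) :
    dirList α = (List.finRange d).flatMap fun i =>
      List.replicate (α i) (EuclideanSpace.single i (1 : ℝ)) := by
  unfold dirList
  induction List.finRange d <;> simp_all

lemma mem_leibnizSplits_dirList {d : ℕ} (α : Fin d → ℕ) {p : List (Ed d) × List (Ed d)}
    (hp : p ∈ leibnizSplits (dirList α)) :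
    ∃ α₁ α₂ : Fin d → ℕ, α₁ + α₂ = α ∧ p = (dirList α₁, dirList α₂) := by
  rw [dirList_eq_flatMap] at hp
  obtain ⟨α₁, α₂, hsum, rfl⟩ :=
    mem_leibnizSplits_flatMap_replicate _ (List.nodup_finRange d) α hp
  exact ⟨α₁, α₂, funext fun i => hsum i (List.mem_finRange i),
    by simp only [dirList_eq_flatMap]⟩

lemma mem_leibnizSplits_dirListP {d : ℕ} (α β : Fin d → ℕ) {p : List (Ed2 d) × List (Ed2 d)}
    (hp : p ∈ leibnizSplits (dirListP α β)) :
    ∃ α₁ β₁ α₂ β₂ : Fin d → ℕ, α₁ + α₂ = α ∧ β₁ + β₂ = β ∧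
      p = (dirListP α₁ β₁, dirListP α₂ β₂) := by
  obtain ⟨p₁, h₁, p₂, h₂, rfl⟩ := mem_leibnizSplits_append _ _ hp
  obtain ⟨q, hq, rfl⟩ := mem_leibnizSplits_map _ _ h₁
  obtain ⟨q', hq', rfl⟩ := mem_leibnizSplits_map _ _ h₂
  obtain ⟨α₁, α₂, hα, rfl⟩ := mem_leibnizSplits_dirList α hq
  obtain ⟨β₁, β₂, hβ, rfl⟩ := mem_leibnizSplits_dirList β hq'
  exact ⟨α₁, β₁, α₂, β₂, hα, hβ, rfl⟩

lemma mOrder_add {d : ℕ} (α β : Fin d → ℕ) : mOrder (α + β) = mOrder α + mOrder β :=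
  Finset.sum_add_distrib

lemma jap_pos {d : ℕ} (ξ : Ed d) : 0 < jap ξ :=
  Real.sqrt_pos.mpr (by positivity)

lemma jap_rpow_nonneg {d : ℕ} (ξ : Ed d) (s : ℝ) : 0 ≤ jap ξ ^ s :=
  (Real.rpow_pos_of_pos (jap_pos ξ) s).le

lemma exists_bound_list_sum {ι T : Type} (l : List ι) (F : ι → T → ℝ) {w : T → ℝ}
    (hw : ∀ x, 0 ≤ w x) (hF : ∀ p ∈ l, ∃ C, 0 < C ∧ ∀ x, F p x ≤ C * w x) :
    ∃ C, 0 < C ∧ ∀ x, (l.map fun p => F p x).sum ≤ C * w x := by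
  induction l with
  | nil => exact ⟨1, one_pos, fun x => by simpa using hw x⟩
  | cons p l ih =>
    obtain ⟨Cp, hCp, hp⟩ := hF p List.mem_cons_self
    obtain ⟨Cl, hCl, hl⟩ := ih fun q hq => hF q (List.mem_cons_of_mem _ hq)
    refine ⟨Cp + Cl, by positivity, fun x => ?_⟩
    simpa only [List.map_cons, List.sum_cons, add_mul] using add_le_add (hp x) (hl x)

theorem SymbC.mul {d : ℕ} {ρ δ : ℝ} {ω₁ ω₂ : Ed d → Ed d → ℝ} {f g : Ed d → Ed d → ℂ}
    (hω₁ : ∀ x ξ, 0 ≤ ω₁ x ξ) (hω₂ : ∀ x ξ, 0 ≤ ω₂ x ξ)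
    (hf : SymbC ρ δ ω₁ f) (hg : SymbC ρ δ ω₂ g) :
    SymbC ρ δ (fun x ξ => ω₁ x ξ * ω₂ x ξ) fun x ξ => f x ξ * g x ξ := by
  obtain ⟨hf_smooth, hf_bound⟩ := hf
  obtain ⟨hg_smooth, hg_bound⟩ := hg
  refine ⟨hf_smooth.mul hg_smooth, fun α β => ?_⟩
  set E : ℕ → ℕ → ℝ := fun m n => δ * (m : ℝ) - ρ * (n : ℝ)
  have hterm : ∀ p ∈ leibnizSplits (dirListP α β), ∃ C, 0 < C ∧ ∀ z : Ed2 d,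
      ‖pditer p.1 (Function.uncurry f) z * pditer p.2 (Function.uncurry g) z‖ ≤
        C * (ω₁ z.1 z.2 * ω₂ z.1 z.2 * jap z.2 ^ E (mOrder α) (mOrder β)) := by
    intro p hp
    obtain ⟨α₁, β₁, α₂, β₂, rfl, rfl, rfl⟩ := mem_leibnizSplits_dirListP α β hp
    obtain ⟨C₁, hC₁, hb₁⟩ := hf_bound α₁ β₁
    obtain ⟨C₂, hC₂, hb₂⟩ := hg_bound α₂ β₂
    refine ⟨C₁ * C₂, by positivity, fun ⟨x, ξ⟩ => ?_⟩
    have hE : jap ξ ^ E (mOrder (α₁ + α₂)) (mOrder (β₁ + β₂)) =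
        jap ξ ^ E (mOrder α₁) (mOrder β₁) * jap ξ ^ E (mOrder α₂) (mOrder β₂) := by
      rw [← Real.rpow_add (jap_pos ξ)]
      simp only [E, mOrder_add, Nat.cast_add]
      ring_nf
    rw [norm_mul, hE]
    calc _ ≤ (C₁ * ω₁ x ξ * jap ξ ^ E (mOrder α₁) (mOrder β₁)) *
          (C₂ * ω₂ x ξ * jap ξ ^ E (mOrder α₂) (mOrder β₂)) :=
          mul_le_mul (hb₁ x ξ) (hb₂ x ξ) (norm_nonneg _) ((norm_nonneg _).trans (hb₁ x ξ))
      _ = _ := by ring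
  obtain ⟨C, hC, hbound⟩ := exists_bound_list_sum _ _
    (fun z : Ed2 d => mul_nonneg (mul_nonneg (hω₁ z.1 z.2) (hω₂ z.1 z.2)) (jap_rpow_nonneg _ _))
    hterm
  refine ⟨C, hC, fun x ξ => ?_⟩
  calc ‖pditer (dirListP α β) (fun z => Function.uncurry f z * Function.uncurry g z) (x, ξ)‖
      ≤ ((leibnizSplits (dirListP α β)).map fun p => ‖pditer p.1 (Function.uncurry f) (x, ξ) *
          pditer p.2 (Function.uncurry g) (x, ξ)‖).sum := by
        rw [pditer_mul _ hf_smooth hg_smooth]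
        exact (List.le_sum_of_subadditive _ norm_zero.le norm_add_le _).trans_eq
          (by rw [List.map_map]; rfl)
    _ ≤ C * (ω₁ x ξ * ω₂ x ξ * jap ξ ^ E (mOrder α) (mOrder β)) := hbound (x, ξ)
    _ = _ := by ring

theorem statement9_general {d : ℕ} (r : ℝ)
    (a ar : Ed d → Ed d → ℂ)
    (har : SymbC 1 0 (fun _ ξ => jap ξ ^ r) ar)
    (hdiff : SymbC 1 0 (fun _ ξ => jap ξ ^ (r - 1)) (fun x ξ => a x ξ - ar x ξ))
    (x₀ ξ₀ : Ed d)
    (X : Set (Ed d)) (hX : IsOpen X) (hx₀ : x₀ ∈ X)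
    (Γ : Set (Ed d)) (hΓ : IsOpenConeNZ Γ) (hξΓ : ξ₀ ∈ Γ)
    (R : ℝ) (hR : 0 < R)
    (b : Ed d → Ed d → ℂ) (hb : SymbC 1 0 (fun _ ξ => jap ξ ^ (-r)) b)
    (hinv : ∀ x ∈ X, ∀ ξ ∈ Γ, R < ‖ξ‖ → ar x ξ * b x ξ = 1) :
    (x₀, ξ₀) ∉ CharSet 1 0 (fun _ ξ => jap ξ ^ r) a := by
  have hc := SymbC.mul (fun _ _ => jap_rpow_nonneg _ _) (fun _ _ => jap_rpow_nonneg _ _) hb har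
  have hh := SymbC.mul (fun _ _ => jap_rpow_nonneg _ _) (fun _ _ => jap_rpow_nonneg _ _) hb hdiff
  simp only [← Real.rpow_add (jap_pos _), neg_add_cancel, Real.rpow_zero] at hc
  rintro ⟨-, hchar⟩
  refine hchar ⟨b, fun x ξ => b x ξ * ar x ξ, fun x ξ => b x ξ * (a x ξ - ar x ξ),
    X, Γ, R + 1, ?_, hc, ?_, hX, hx₀, hΓ, hξΓ, by linarith, ?_, fun x ξ => by ring⟩
  · simpa only [Real.rpow_neg (jap_pos _).le] using hb
  · convert hh using 3
    rw [← Real.rpow_add (jap_pos _)]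
    ring_nf
  · intro x hx ξ hξ hRξ
    dsimp only
    rw [mul_comm]
    exact hinv x hx ξ hξ (by linarith)

/-- a polyhomogeneous symbol whose principal part is invertible near
`(x₀, ξ₀)` is non-characteristic there (with respect to `ω₀ = ⟨ξ⟩^r`). -/
theorem statement9 {d : ℕ} (hd : 0 < d) (r : ℝ)
    (a ar : Ed d → Ed d → ℂ)
    (ha : SymbC 1 0 (fun _ ξ => jap ξ ^ r) a)
    (har : SymbC 1 0 (fun _ ξ => jap ξ ^ r) ar)
    (hdiff : SymbC 1 0 (fun _ ξ => jap ξ ^ (r - 1)) (fun x ξ => a x ξ - ar x ξ))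
    (x₀ ξ₀ : Ed d) (hξ₀ : ξ₀ ≠ 0)
    (X : Set (Ed d)) (hX : IsOpen X) (hx₀ : x₀ ∈ X)
    (Γ : Set (Ed d)) (hΓ : IsOpenConeNZ Γ) (hξΓ : ξ₀ ∈ Γ)
    (R : ℝ) (hR : 0 < R)
    (b : Ed d → Ed d → ℂ) (hb : SymbC 1 0 (fun _ ξ => jap ξ ^ (-r)) b)
    (hinv : ∀ x ∈ X, ∀ ξ ∈ Γ, R < ‖ξ‖ → ar x ξ * b x ξ = 1) :
    (x₀, ξ₀) ∉ CharSet 1 0 (fun _ ξ => jap ξ ^ r) a :=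
  statement9_general r a ar har hdiff x₀ ξ₀ X hX hx₀ Γ hΓ hξΓ R hR b hb hinv

end
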